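/- arXiv:0711.0481 — 2 statements merged into one kernel-verified Lean document; each statement's English description precedes it below -/
import Mathlib

section
/- Let q ∈ (-1,1], q ≠ 0. For every natural number x and every natural number n, [x]^n = Σ_{j=0}^{n} S(n,j,q) · [x][x-1]⋯[x-j+1], where the empty product (j = 0) is 1. -/
open Finset

/-- The q-integer `[m] = (1 - q^m)/(1 - q)`, with `[m] = m` when `q = 1`. -/
noncomputable def qInt (q : ℝ) (m : ℤ) : ℝ := if q = 1 then m else (1 - q ^ m) / (1 - q)

/-- The q-factorial `[n]! = [n][n-1]⋯[1]`, `[0]! = 1`. -/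
noncomputable def qFact (q : ℝ) : ℕ → ℝ
  | 0 => 1
  | n + 1 => qInt q (n + 1) * qFact q n

/-- The q-binomial coefficient `(n choose k)_q = [n]!/([n-k]![k]!)`. -/
noncomputable def qBinom (q : ℝ) (n k : ℕ) : ℝ := qFact q n / (qFact q (n - k) * qFact q k)

/-- The q-deformed Stirling numbers of the second kind, defined by the recurrence
`S(n+1,k,q) = q^(k-1) S(n,k-1,q) + [k] S(n,k,q)`, with `S(0,0,q)=1`, `S(n,0,q)=0` for `n ≥ 1`,
and `S(n,k,q) = 0` for `k > n`. -/
noncomputable def qStirling2 (q : ℝ) : ℕ → ℕ → ℝ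
  | 0, 0 => 1
  | 0, _ + 1 => 0
  | _ + 1, 0 => 0
  | n + 1, k + 1 => q ^ k * qStirling2 q n k + qInt q (k + 1) * qStirling2 q n (k + 1)

/-! Multiplying the q-falling factorial by `[x]` and splitting `[x] = [j] + q^j [x - j]` gives
`[x] · [x]_j = [j] · [x]_j + q^j · [x]_{j+1}`, the q-analogue of `x (x)_j = j (x)_j + (x)_{j+1}`.
Its coefficients are exactly those of the recurrence of `qStirling2`, read transposed, so induction
on `n` expands `[x]^n` in the q-falling factorials. -/

noncomputable def qDescFactorial (q : ℝ) (x : ℤ) (j : ℕ) : ℝ :=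
  ∏ i ∈ range j, qInt q (x - i)

lemma qInt_zero (q : ℝ) : qInt q 0 = 0 := by
  simp [qInt]

lemma qInt_add {q : ℝ} (hq0 : q ≠ 0) (m n : ℤ) :
    qInt q (m + n) = qInt q m + q ^ m * qInt q n := by
  unfold qInt
  split_ifs with h
  · subst h
    simp
  · have hq1 : (1 : ℝ) - q ≠ 0 := sub_ne_zero.mpr (Ne.symm h)
    rw [zpow_add₀ hq0]
    field_simp
    ring

lemma qStirling2_succ_succ (q : ℝ) (n k : ℕ) :
    qStirling2 q (n + 1) (k + 1) =
      q ^ k * qStirling2 q n k + qInt q (k + 1) * qStirling2 q n (k + 1) :=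
  rfl

lemma qStirling2_eq_zero_of_lt (q : ℝ) {n k : ℕ} (h : n < k) : qStirling2 q n k = 0 := by
  induction n generalizing k with
  | zero =>
    obtain ⟨k, rfl⟩ := Nat.exists_eq_succ_of_ne_zero h.ne'
    rfl
  | succ n ih =>
    obtain ⟨k, rfl⟩ := Nat.exists_eq_succ_of_ne_zero (Nat.ne_zero_of_lt h)
    rw [qStirling2_succ_succ, ih (by omega), ih (by omega)]
    ring

lemma qInt_mul_qDescFactorial {q : ℝ} (hq0 : q ≠ 0) (x : ℤ) (j : ℕ) :
    qInt q x * qDescFactorial q x j =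
      qInt q j * qDescFactorial q x j + q ^ j * qDescFactorial q x (j + 1) := by
  have hsplit : qInt q x = qInt q j + q ^ j * qInt q (x - j) := by
    rw [← zpow_natCast, ← qInt_add hq0, add_sub_cancel]
  rw [qDescFactorial, qDescFactorial, prod_range_succ, hsplit]
  ring

lemma sum_range_qStirling2_succ_mul (q : ℝ) (n : ℕ) (f : ℕ → ℝ) :
    ∑ j ∈ range (n + 2), qStirling2 q (n + 1) j * f j =
      ∑ j ∈ range (n + 1), qStirling2 q n j * (qInt q j * f j + q ^ j * f (j + 1)) := by
  have hshift : ∑ j ∈ range (n + 1), qStirling2 q n j * qInt q j * f j =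
      ∑ k ∈ range (n + 1), qStirling2 q n (k + 1) * qInt q (k + 1) * f (k + 1) := by
    rw [sum_range_succ', sum_range_succ (fun k => qStirling2 q n (k + 1) * _ * _),
      qStirling2_eq_zero_of_lt q (Nat.lt_succ_self n)]
    simp [qInt_zero]
  rw [sum_range_succ', qStirling2, zero_mul, add_zero]
  simp only [mul_add, sum_add_distrib, ← mul_assoc, hshift]
  rw [← sum_add_distrib]
  refine sum_congr rfl fun k _ => ?_
  rw [qStirling2_succ_succ]
  ring

lemma pow_eq_sum_qStirling2_mul {q t : ℝ} {P : ℕ → ℝ} (h0 : P 0 = 1)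
    (hP : ∀ j, t * P j = qInt q j * P j + q ^ j * P (j + 1)) (n : ℕ) :
    t ^ n = ∑ j ∈ range (n + 1), qStirling2 q n j * P j := by
  induction n with
  | zero => simp [qStirling2, h0]
  | succ n ih =>
    rw [sum_range_qStirling2_succ_mul, pow_succ', ih, mul_sum]
    refine sum_congr rfl fun j _ => ?_
    rw [mul_left_comm, hP]

theorem qInt_pow_eq_sum_qStirling2_fallingFactorial_general (q : ℝ) (hq0 : q ≠ 0)
    (x n : ℕ) :
    qInt q x ^ n =
      ∑ j ∈ Finset.range (n + 1),
        qStirling2 q n j * ∏ i ∈ Finset.range j, qInt q ((x : ℤ) - i) :=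
  pow_eq_sum_qStirling2_mul (P := qDescFactorial q x) (prod_range_zero _)
    (qInt_mul_qDescFactorial hq0 x) n

theorem qInt_pow_eq_sum_qStirling2_fallingFactorial (q : ℝ) (hq0 : q ≠ 0)
    (hq : q ∈ Set.Ioc (-1 : ℝ) 1) (x n : ℕ) :
    qInt q x ^ n =
      ∑ j ∈ Finset.range (n + 1),
        qStirling2 q n j * ∏ i ∈ Finset.range j, qInt q ((x : ℤ) - i) :=
  qInt_pow_eq_sum_qStirling2_fallingFactorial_general q hq0 x n
end

section
/- Let q ∈ (-1,1], q ≠ 0. For every natural number x and every natural number n, [x][x-1]⋯[x-n+1] = Σ_{j=0}^{n} s(n,j,q) · [x]^j, where the empty product (n = 0) is 1. -/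
open Finset

/-- The q-deformed Stirling numbers of the first kind, defined by the recurrence
`s(n+1,k,q) = q^(-n) (s(n,k-1,q) - [n] s(n,k,q))`, with `s(0,0,q)=1`, `s(n,0,q)=0` for `n ≥ 1`,
and `s(n,k,q) = 0` for `k > n`. -/
noncomputable def qStirling1 (q : ℝ) : ℕ → ℕ → ℝ
  | 0, 0 => 1
  | 0, _ + 1 => 0
  | _ + 1, 0 => 0
  | n + 1, k + 1 => q ^ (-(n : ℤ)) * (qStirling1 q n k - qInt q n * qStirling1 q n (k + 1))

lemma qInt_sub (q : ℝ) (hq0 : q ≠ 0) (m k : ℤ) :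
    qInt q (m - k) = q ^ (-k) * (qInt q m - qInt q k) := by
  by_cases h : q = 1
  · simp [qInt, h]
  · have h1 : (1 : ℝ) - q ≠ 0 := sub_ne_zero.mpr (Ne.symm h)
    simp only [qInt, if_neg h]
    rw [zpow_sub₀ hq0, zpow_neg]
    field_simp
    ring

lemma qStirling1_succ_zero (q : ℝ) (n : ℕ) : qStirling1 q (n + 1) 0 = 0 := rfl

lemma qStirling1_succ_succ (q : ℝ) (n k : ℕ) :
    qStirling1 q (n + 1) (k + 1) =
      q ^ (-(n : ℤ)) * (qStirling1 q n k - qInt q n * qStirling1 q n (k + 1)) := rfl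

lemma qStirling1_eq_zero_of_lt (q : ℝ) : ∀ {n k : ℕ}, n < k → qStirling1 q n k = 0
  | 0, _ + 1, _ => rfl
  | n + 1, k + 1, h => by
    rw [qStirling1_succ_succ, qStirling1_eq_zero_of_lt q (by omega),
      qStirling1_eq_zero_of_lt q (by omega), mul_zero, sub_zero, mul_zero]

lemma qInt_mul_qStirling1_zero (q : ℝ) (n : ℕ) : qInt q n * qStirling1 q n 0 = 0 := by
  cases n with
  | zero => rw [Nat.cast_zero, qInt_zero, zero_mul]
  | succ n => rw [qStirling1_succ_zero, mul_zero]

lemma sum_qStirling1_shift (q t : ℝ) (n : ℕ) :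
    ∑ j ∈ range (n + 1), qStirling1 q n (j + 1) * t ^ (j + 1) =
      ∑ j ∈ range (n + 1), qStirling1 q n j * t ^ j - qStirling1 q n 0 := by
  rw [sum_range_succ, qStirling1_eq_zero_of_lt q (Nat.lt_succ_self n), sum_range_succ']
  ring

lemma sum_qStirling1_succ_mul_pow (q t : ℝ) (n : ℕ) :
    ∑ j ∈ range (n + 2), qStirling1 q (n + 1) j * t ^ j =
      q ^ (-(n : ℤ)) * (t - qInt q n) * ∑ j ∈ range (n + 1), qStirling1 q n j * t ^ j := by
  rw [sum_range_succ', qStirling1_succ_zero]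
  simp only [qStirling1_succ_succ]
  calc ∑ j ∈ range (n + 1),
          q ^ (-(n : ℤ)) * (qStirling1 q n j - qInt q n * qStirling1 q n (j + 1)) * t ^ (j + 1)
          + 0 * t ^ 0
      = q ^ (-(n : ℤ)) * (t * ∑ j ∈ range (n + 1), qStirling1 q n j * t ^ j
          - qInt q n * ∑ j ∈ range (n + 1), qStirling1 q n (j + 1) * t ^ (j + 1)) := by
        simp only [mul_sum, ← sum_sub_distrib, zero_mul, add_zero]
        refine sum_congr rfl fun j _ => ?_
        ring
    _ = _ := by
        rw [sum_qStirling1_shift]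
        linear_combination q ^ (-(n : ℤ)) * qInt_mul_qStirling1_zero q n

theorem qFallingFactorial_eq_sum_qStirling1_pow_general (q : ℝ) (hq0 : q ≠ 0)
    (x n : ℕ) :
    (∏ i ∈ Finset.range n, qInt q ((x : ℤ) - i)) =
      ∑ j ∈ Finset.range (n + 1), qStirling1 q n j * qInt q x ^ j := by
  induction n with
  | zero => simp [qStirling1]
  | succ n ih =>
    rw [prod_range_succ, ih, sum_qStirling1_succ_mul_pow, qInt_sub q hq0]
    ring

theorem qFallingFactorial_eq_sum_qStirling1_pow (q : ℝ) (hq0 : q ≠ 0)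
    (hq : q ∈ Set.Ioc (-1 : ℝ) 1) (x n : ℕ) :
    (∏ i ∈ Finset.range n, qInt q ((x : ℤ) - i)) =
      ∑ j ∈ Finset.range (n + 1), qStirling1 q n j * qInt q x ^ j :=
  qFallingFactorial_eq_sum_qStirling1_pow_general q hq0 x n
end
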